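/- Suppose η = ε_{i₀} for some i₀ ∈ D₁. Define σ = 1 + a_{bw} + a_{i₀w} + Σ_{i ∈ D, i ≠ i₀} min{a_{iw} + ε_{i₀}, a_{bw}/a_{bi}}, and the weight set W by w_b = (a_{bw} − ε_{i₀})/σ, w_{i₀} = (a_{i₀w} + ε_{i₀})/σ, w_w = 1/σ, and w_i = min{a_{iw} + ε_{i₀}, a_{bw}/a_{bi}}/σ for i ∈ D\{i₀}. Then W ∈ 𝒲 and ε_W = ε_{i₀}/σ. -/

import Mathlib

open Finset

noncomputable def epsW (D : Finset ℕ) (hD : D.Nonempty) (b w : ℕ)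
    (ab aw : ℕ → ℝ) (abw : ℝ) (v : ℕ → ℝ) : ℝ :=
  D.sup' hD fun i =>
    max |v b - ab i * v i| (max |v i - aw i * v w| |v b - abw * v w|)

noncomputable def epsi (ab aw : ℕ → ℝ) (abw : ℝ) (i : ℕ) : ℝ :=
  |ab i * aw i - abw| / (ab i + 2)

noncomputable def epsij (ab aw : ℕ → ℝ) (i j : ℕ) : ℝ :=
  |ab i * aw i - ab j * aw j| / (ab i + ab j + 2)

noncomputable def eta (D : Finset ℕ) (hD : D.Nonempty) (ab aw : ℕ → ℝ) (abw : ℝ) : ℝ :=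
  (D ×ˢ D).sup' (hD.product hD) fun p =>
    max (epsi ab aw abw p.1) (epsij ab aw p.1 p.2)

/-! After scaling by `σ` one works with `u = σ W`, and `ε = ε_{i₀}`. The deviation
`|u_b - a_{bw} u_w|` equals `ε` exactly. The hypothesis `η = ε_{i₀}` pins `a_{bw} - a_{bi} a_{iw}`
between `-ε a_{bi}` (through `ε_{i,i₀}`, since `a_{bi₀} a_{i₀w} = a_{bw} - ε (a_{bi₀} + 2)`) and
`ε (a_{bi} + 2)` (through `ε_i`), and with these two bounds the choice
`u_i = min {a_{iw} + ε, a_{bw} / a_{bi}}` keeps both `|u_b - a_{bi} u_i|` and `|u_i - a_{iw} u_w|`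
at most `ε`. -/

section Estimates

variable {ab aw : ℕ → ℝ} {abw : ℝ} {i j : ℕ}

lemma epsi_nonneg (hi : 0 < ab i) : 0 ≤ epsi ab aw abw i :=
  div_nonneg (abs_nonneg _) (by linarith)

lemma epsi_mul_eq_of_lt (hi : 0 < ab i) (h : ab i * aw i < abw) :
    epsi ab aw abw i * (ab i + 2) = abw - ab i * aw i := by
  rw [epsi, abs_of_neg (sub_neg.mpr h), div_mul_cancel₀ _ (by linarith)]
  ring

variable {D : Finset ℕ} (hD : D.Nonempty)

lemma epsi_le_eta (hi : i ∈ D) : epsi ab aw abw i ≤ eta D hD ab aw abw :=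
  le_sup'_of_le _ (mem_product.mpr ⟨hi, hi⟩ : (i, i) ∈ D ×ˢ D) (le_max_left _ _)

lemma epsij_le_eta (hi : i ∈ D) (hj : j ∈ D) : epsij ab aw i j ≤ eta D hD ab aw abw :=
  le_sup'_of_le _ (mem_product.mpr ⟨hi, hj⟩ : (i, j) ∈ D ×ˢ D) (le_max_right _ _)

lemma sub_mem_Icc_of_eta_eq_epsi {i₀ : ℕ} (hab : ∀ i ∈ D, 0 < ab i) (hi₀ : i₀ ∈ D)
    (hi₀D₁ : ab i₀ * aw i₀ < abw) (heta : eta D hD ab aw abw = epsi ab aw abw i₀) (hi : i ∈ D) :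
    abw - ab i * aw i ∈
      Set.Icc (-(epsi ab aw abw i₀ * ab i)) (epsi ab aw abw i₀ * (ab i + 2)) := by
  have hpos := hab i hi
  have hpos₀ := hab i₀ hi₀
  have hεi : |ab i * aw i - abw| ≤ epsi ab aw abw i₀ * (ab i + 2) := by
    rw [← div_le_iff₀ (by linarith), ← heta]
    exact epsi_le_eta hD hi
  have hεii₀ : |ab i * aw i - ab i₀ * aw i₀| ≤ epsi ab aw abw i₀ * (ab i + ab i₀ + 2) := by
    rw [← div_le_iff₀ (by linarith), ← heta]
    exact epsij_le_eta hD hi hi₀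
  have hεi₀ := epsi_mul_eq_of_lt (aw := aw) hpos₀ hi₀D₁
  constructor
  · linarith [le_abs_self (ab i * aw i - ab i₀ * aw i₀)]
  · linarith [neg_abs_le (ab i * aw i - abw)]

end Estimates

section Weights

lemma abs_sub_sub_mul_min_le {a x c ε : ℝ} (ha : 0 < a) (hε : 0 ≤ ε)
    (h : c - a * x ∈ Set.Icc (-(ε * a)) (ε * (a + 2))) :
    |c - ε - a * min (x + ε) (c / a)| ≤ ε := by
  rcases min_cases (x + ε) (c / a) with ⟨hm, hle⟩ | ⟨hm, -⟩ <;> rw [hm]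
  · rw [le_div_iff₀' ha] at hle
    rw [abs_le]
    constructor <;> nlinarith [h.2]
  · rw [mul_div_cancel₀ _ ha.ne', sub_sub_cancel_left, abs_neg, abs_of_nonneg hε]

lemma abs_min_sub_le {a x c ε : ℝ} (ha : 0 < a) (hε : 0 ≤ ε)
    (h : c - a * x ∈ Set.Icc (-(ε * a)) (ε * (a + 2))) :
    |min (x + ε) (c / a) - x| ≤ ε := by
  have hlow : x - ε ≤ c / a := by
    rw [le_div_iff₀ ha]
    nlinarith [h.1]
  rw [abs_le]
  constructor
  · linarith [le_min (by linarith : x - ε ≤ x + ε) hlow]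
  · linarith [min_le_left (x + ε) (c / a)]

/-- The candidate `W` multiplied by `σ`. -/
noncomputable def weight (b w : ℕ) (ab aw : ℕ → ℝ) (abw ε : ℝ) (i : ℕ) : ℝ :=
  if i = b then abw - ε else if i = w then 1 else min (aw i + ε) (abw / ab i)

variable {b w i : ℕ} {ab aw : ℕ → ℝ} {abw ε : ℝ}

lemma weight_of_ne (hb : i ≠ b) (hw : i ≠ w) :
    weight b w ab aw abw ε i = min (aw i + ε) (abw / ab i) := by
  simp [weight, hb, hw]

lemma weight_nonneg {I : Finset ℕ} (hε : 0 ≤ ε) (hεabw : ε ≤ abw)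
    (hab : ∀ i ∈ I \ {b, w}, 0 < ab i) (haw : ∀ i ∈ I \ {b, w}, 0 < aw i) :
    ∀ i ∈ I, 0 ≤ weight b w ab aw abw ε i := by
  intro i hi
  unfold weight
  split_ifs with hb hw
  · linarith
  · exact zero_le_one
  · have hiD : i ∈ I \ {b, w} := by simp [hi, hb, hw]
    exact le_min (by linarith [haw i hiD]) (div_nonneg (by linarith) (hab i hiD).le)

lemma sum_weight {I : Finset ℕ} (hb : b ∈ I) (hw : w ∈ I) (hbw : b ≠ w) :
    ∑ i ∈ I, weight b w ab aw abw ε i =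
      abw - ε + 1 + ∑ i ∈ I \ {b, w}, min (aw i + ε) (abw / ab i) := by
  rw [← sum_sdiff (insert_subset hb (singleton_subset_iff.mpr hw)), sum_pair hbw, add_comm]
  congr 1
  · simp [weight, hbw.symm]
  · refine sum_congr rfl fun i hi => ?_
    simp only [mem_sdiff, mem_insert, mem_singleton, not_or] at hi
    exact weight_of_ne hi.2.1 hi.2.2

variable {D : Finset ℕ} (hD : D.Nonempty)

lemma epsW_div {σ : ℝ} (hσ : 0 < σ) (u : ℕ → ℝ) :
    epsW D hD b w ab aw abw (fun i => u i / σ) = epsW D hD b w ab aw abw u / σ := by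
  rw [epsW, epsW, sup'_div₀ hσ.le]
  congr 1
  funext i
  rw [← max_div_div_right hσ.le, ← max_div_div_right hσ.le]
  simp only [mul_div_assoc', ← sub_div, abs_div, abs_of_pos hσ]

lemma epsW_weight (hbD : b ∉ D) (hwD : w ∉ D) (hbw : b ≠ w) (hε : 0 ≤ ε)
    (hab : ∀ i ∈ D, 0 < ab i)
    (hbounds : ∀ i ∈ D, abw - ab i * aw i ∈ Set.Icc (-(ε * ab i)) (ε * (ab i + 2))) :
    epsW D hD b w ab aw abw (weight b w ab aw abw ε) = ε := by
  have hwb : weight b w ab aw abw ε b = abw - ε := by simp [weight]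
  have hww : weight b w ab aw abw ε w = 1 := by simp [weight, hbw.symm]
  have hbw_term : |weight b w ab aw abw ε b - abw * weight b w ab aw abw ε w| = ε := by
    rw [hwb, hww, mul_one, sub_sub_cancel_left, abs_neg, abs_of_nonneg hε]
  obtain ⟨i₁, hi₁⟩ := hD
  refine le_antisymm (sup'_le _ _ fun i hi => ?_)
    (le_sup'_of_le _ hi₁ (hbw_term.ge.trans ((le_max_right _ _).trans (le_max_right _ _))))
  have hi' : weight b w ab aw abw ε i = min (aw i + ε) (abw / ab i) :=
    weight_of_ne (ne_of_mem_of_not_mem hi hbD) (ne_of_mem_of_not_mem hi hwD)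
  rw [hi']
  simp only [hwb, hww, mul_one] at hbw_term ⊢
  exact max_le (abs_sub_sub_mul_min_le (hab i hi) hε (hbounds i hi))
    (max_le (abs_min_sub_le (hab i hi) hε (hbounds i hi)) hbw_term.le)

end Weights

theorem stmt13_general (n b w : ℕ) (hb : b ∈ Icc 1 n) (hw : w ∈ Icc 1 n) (hbw : b ≠ w)
    (ab aw : ℕ → ℝ) (abw : ℝ)
    (hab : ∀ i ∈ Icc 1 n \ {b, w}, 0 < ab i) (haw : ∀ i ∈ Icc 1 n \ {b, w}, 0 < aw i)
    (hD : (Icc 1 n \ {b, w}).Nonempty)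
    (i0 : ℕ) (hi0 : i0 ∈ Icc 1 n \ {b, w}) (hi0D1 : ab i0 * aw i0 < abw)
    (heta : eta (Icc 1 n \ {b, w}) hD ab aw abw = epsi ab aw abw i0)
    (hbig : epsi ab aw abw i0 < abw)
    (σ : ℝ)
    (hσ : σ = 1 + abw + aw i0 +
      ∑ i ∈ (Icc 1 n \ {b, w}).erase i0, min (aw i + epsi ab aw abw i0) (abw / ab i))
    (v : ℕ → ℝ)
    (hv : ∀ i, v i = if i = b then (abw - epsi ab aw abw i0) / σ
      else if i = w then 1 / σ
      else if i = i0 then (aw i0 + epsi ab aw abw i0) / σ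
      else min (aw i + epsi ab aw abw i0) (abw / ab i) / σ) :
    (∀ i ∈ Icc 1 n, 0 ≤ v i) ∧ (∑ i ∈ Icc 1 n, v i) = 1 ∧
      epsW (Icc 1 n \ {b, w}) hD b w ab aw abw v = epsi ab aw abw i0 / σ := by
  set ε := epsi ab aw abw i0
  have hab₀ := hab i0 hi0
  have hε : 0 ≤ ε := epsi_nonneg hab₀
  -- `a_{bi₀} (a_{i₀w} + ε) = a_{bw} - 2ε`, so the `min` defining the other weights picks
  -- `a_{i₀w} + ε` at `i₀` too.
  have hmin₀ : min (aw i0 + ε) (abw / ab i0) = aw i0 + ε := by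
    refine min_eq_left ((le_div_iff₀' hab₀).mpr ?_)
    linarith [epsi_mul_eq_of_lt (aw := aw) hab₀ hi0D1]
  have hvσ : v = fun i => weight b w ab aw abw ε i / σ := by
    funext i
    rw [hv, weight]
    split_ifs with _ _ hi₀ <;> first | rfl | rw [hi₀, hmin₀]
  have hσ_sum : σ = ∑ i ∈ Icc 1 n, weight b w ab aw abw ε i := by
    rw [sum_weight hb hw hbw, ← add_sum_erase _ _ hi0, hmin₀, hσ]
    ring
  have hweight := weight_nonneg hε hbig.le hab haw
  have hσpos : 0 < σ := by
    rw [hσ_sum]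
    refine zero_lt_one.trans_le (le_of_eq_of_le ?_ (single_le_sum hweight hw))
    simp [weight, hbw.symm]
  subst hvσ
  refine ⟨fun i hi => div_nonneg (hweight i hi) hσpos.le, ?_, ?_⟩
  · rw [← sum_div, ← hσ_sum, div_self hσpos.ne']
  · rw [epsW_div hD hσpos, epsW_weight hD (by simp) (by simp) hbw hε hab
      (fun i hi => sub_mem_Icc_of_eta_eq_epsi hD hab hi0 hi0D1 heta hi)]

/-- the explicit candidate W lies in 𝒲 and satisfies ε_W = ε_{i₀}/σ. -/
theorem stmt13 (n b w : ℕ) (hn : 3 ≤ n) (hb : b ∈ Icc 1 n) (hw : w ∈ Icc 1 n) (hbw : b ≠ w)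
    (ab aw : ℕ → ℝ) (abw : ℝ)
    (hab : ∀ i ∈ Icc 1 n \ {b, w}, 0 < ab i) (haw : ∀ i ∈ Icc 1 n \ {b, w}, 0 < aw i)
    (habw : 0 < abw)
    (hD : (Icc 1 n \ {b, w}).Nonempty)
    (i0 : ℕ) (hi0 : i0 ∈ Icc 1 n \ {b, w}) (hi0D1 : ab i0 * aw i0 < abw)
    (heta : eta (Icc 1 n \ {b, w}) hD ab aw abw = epsi ab aw abw i0)
    (hbig : epsi ab aw abw i0 < abw)
    (σ : ℝ)
    (hσ : σ = 1 + abw + aw i0 +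
      ∑ i ∈ (Icc 1 n \ {b, w}).erase i0, min (aw i + epsi ab aw abw i0) (abw / ab i))
    (v : ℕ → ℝ)
    (hv : ∀ i, v i = if i = b then (abw - epsi ab aw abw i0) / σ
      else if i = w then 1 / σ
      else if i = i0 then (aw i0 + epsi ab aw abw i0) / σ
      else min (aw i + epsi ab aw abw i0) (abw / ab i) / σ) :
    (∀ i ∈ Icc 1 n, 0 ≤ v i) ∧ (∑ i ∈ Icc 1 n, v i) = 1 ∧
      epsW (Icc 1 n \ {b, w}) hD b w ab aw abw v = epsi ab aw abw i0 / σ :=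
  stmt13_general n b w hb hw hbw ab aw abw hab haw hD i0 hi0 hi0D1 heta hbig σ hσ v hv
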